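/- Let Q be a bounded sublinear rate operator on ℬ, and for each t ≥ 0 let e^{tQ} denote the limit in operator seminorm of the sequence ((I + (t/n)Q)^n)_{n∈ℕ}. Then for every t ≥ 0, the difference quotient (e^{sQ} − e^{tQ})/(s − t) converges in operator seminorm to Q ∘ e^{tQ} as s → t (with s ≥ 0, s ≠ t); that is, ‖(e^{sQ} − e^{tQ})/(s − t) − Q∘e^{tQ}‖ → 0 as s → t. -/

import Mathlib

open Filter Topology BoundedContinuousFunction ENNReal NNReal

/-- The space of (possibly nonlinear) operators on the Banach space `X →ᵇ ℝ`
of bounded (continuous, i.e. with `X` discrete: all) real-valued functions. -/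
abbrev Op (X : Type*) [TopologicalSpace X] :=
  BoundedContinuousFunction X ℝ → BoundedContinuousFunction X ℝ

/-- The operator seminorm `‖A‖ = sup {‖A f‖/‖f‖ : f ≠ 0}`, a value in `[0,∞]`. -/
noncomputable def opSemiNorm {X : Type*} [TopologicalSpace X] (A : Op X) : ℝ≥0∞ :=
  ⨆ (f : BoundedContinuousFunction X ℝ) (_ : f ≠ 0), (‖A f‖₊ : ℝ≥0∞) / (‖f‖₊ : ℝ≥0∞)

/-- The operator norm distance `d(A,B) = ‖A 0 − B 0‖∞ + ‖A − B‖`. -/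
noncomputable def opDist {X : Type*} [TopologicalSpace X] (A B : Op X) : ℝ≥0∞ :=
  (‖A 0 - B 0‖₊ : ℝ≥0∞) + opSemiNorm (A - B)

/-- Sublinear transition operator: (T1) positive homogeneity, (T2) subadditivity,
(T3) `T f ≤ sup f` pointwise. -/
def IsSublinearTransition {X : Type*} [TopologicalSpace X] (T : Op X) : Prop :=
  (∀ (c : ℝ), 0 ≤ c → ∀ f, T (c • f) = c • T f) ∧
  (∀ f g, ∀ x, T (f + g) x ≤ T f x + T g x) ∧
  (∀ f, ∀ x, T f x ≤ ⨆ y, f y)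

/-- Sublinear rate operator: (Q1) positive homogeneity, (Q2) subadditivity,
(Q3) constants map to zero, (Q4) positive maximum principle. -/
def IsSublinearRate {X : Type*} [TopologicalSpace X] (Q : Op X) : Prop :=
  (∀ (c : ℝ), 0 ≤ c → ∀ f, Q (c • f) = c • Q f) ∧
  (∀ f g, ∀ x, Q (f + g) x ≤ Q f x + Q g x) ∧
  (∀ (c : ℝ), Q (BoundedContinuousFunction.const X c) = 0) ∧
  (∀ f, ∀ x : X, (⨆ y, f y) = f x → 0 ≤ f x → Q f x ≤ 0)

/-- The Euler approximation `(I + (t/n) Q)^n` (n-fold composition). -/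
noncomputable def euler {X : Type*} [TopologicalSpace X] (Q : Op X) (t : ℝ) (n : ℕ) : Op X :=
  (fun f => f + (t / (n : ℝ)) • Q f)^[n]

/-- Uniform continuity of a semigroup `(S_t)_{t ≥ 0}`:
`‖S_s − S_t‖ → 0` as `s → t` (within `s ≥ 0`), for every `t ≥ 0`. -/
def IsUniformlyContinuousSG {X : Type*} [TopologicalSpace X] (S : ℝ → Op X) : Prop :=
  ∀ t : ℝ, 0 ≤ t →
    Tendsto (fun s => opSemiNorm (S s - S t)) (nhdsWithin t (Set.Ici 0)) (nhds 0)

/-- The indicator function `1_x` of the singleton `{x}`. -/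
noncomputable def indic {X : Type*} [TopologicalSpace X] [DiscreteTopology X] (x : X) :
    BoundedContinuousFunction X ℝ :=
  BoundedContinuousFunction.ofNormedAddCommGroup
    (Set.indicator {x} (fun _ => (1 : ℝ))) continuous_of_discreteTopology 1
    (by
      intro y
      classical
      rw [Set.indicator_apply]
      split_ifs <;> simp)

/-- Downward continuity (continuity from above) of an operator. -/
def DownwardContinuous {X : Type*} [TopologicalSpace X] (A : Op X) : Prop :=
  ∀ (f : ℕ → BoundedContinuousFunction X ℝ) (g : BoundedContinuousFunction X ℝ),
    (∀ n x, f (n + 1) x ≤ f n x) →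
    (∀ x, Tendsto (fun n => f n x) atTop (nhds (g x))) →
    ∀ x, Tendsto (fun n => A (f n) x) atTop (nhds (A g x))

/-!
Subadditivity makes a bounded sublinear rate operator `Q` Lipschitz with constant `K = ‖Q‖`.
For such `Q` the Euler iterates `(I + δQ)^n` obey bounds that depend on `n` and `δ` only through
`nδ`: they are `e^{nδK}`-Lipschitz, depend Lipschitz-continuously on the step size, and satisfy
the second order Taylor estimate `‖(I + δQ)^n f - f - nδ Q f‖ ≤ (nδK)² e^{nδK} ‖f‖`. All of this
passes to the limit `E`. At rational times the Euler schemes compose exactly, so `E` is a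
semigroup there, and by continuity in time everywhere. Writing `E s = E (s - t) ∘ E t` for `s > t`
(and `E t = E (t - s) ∘ E s` for `s < t`), the Taylor estimate bounds the difference quotient
minus `Q ∘ E t` by `2 K² e^{max s t · K} |s - t|`.
-/

lemma tendsto_apply_of_norm_sub_le {V ι : Type*} [SeminormedAddCommGroup V] {l : Filter ι}
    {A : ι → V → V} {C : ℝ} {g : ι → V} {f b : V} (hA : ∀ᶠ i in l, ∀ x, ‖A i x - A i f‖ ≤ C * ‖x - f‖)
    (hf : Tendsto (fun i => A i f) l (𝓝 b)) (hg : Tendsto g l (𝓝 f)) :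
    Tendsto (fun i => A i (g i)) l (𝓝 b) := by
  rw [tendsto_iff_norm_sub_tendsto_zero] at hf hg ⊢
  have hbound : Tendsto (fun i => C * ‖g i - f‖ + ‖A i f - b‖) l (𝓝 (C * 0 + 0)) :=
    (hg.const_mul C).add hf
  rw [mul_zero, add_zero] at hbound
  refine squeeze_zero' (.of_forall fun _ => norm_nonneg _) (hA.mono fun i hi => ?_) hbound
  exact (norm_sub_le_norm_sub_add_norm_sub _ (A i f) _).trans (by gcongr; exact hi (g i))

section EulerScheme

variable {V : Type*} [NormedAddCommGroup V] [NormedSpace ℝ V] {Q : V → V} {K : ℝ≥0}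

def eulerStep (Q : V → V) (δ : ℝ) (f : V) : V := f + δ • Q f

@[simp]
lemma eulerStep_zero (Q : V → V) : eulerStep Q 0 = id := by
  funext f
  simp [eulerStep]

lemma iterate_eulerStep_nat_div (Q : V → V) (m q k : ℕ) :
    (eulerStep Q ((m : ℝ) / q / (m * k : ℕ)))^[m * k] = (eulerStep Q (1 / (q * k)))^[m * k] := by
  rcases Nat.eq_zero_or_pos (m * k) with hmk | hmk
  · rw [hmk, Function.iterate_zero, Function.iterate_zero]
  · have hm : (m : ℝ) ≠ 0 := by exact_mod_cast (Nat.pos_of_mul_pos_right hmk).ne'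
    rw [Nat.cast_mul, div_div, mul_left_comm, div_mul_cancel_left₀ hm, one_div]

lemma eventually_natCast_mul_div (t : ℝ) : ∀ᶠ n : ℕ in atTop, (n : ℝ) * (t / n) = t :=
  (eventually_ne_atTop 0).mono fun _ hn => mul_div_cancel₀ t (Nat.cast_ne_zero.2 hn)

lemma norm_eulerStep_sub_le (hQ : LipschitzWith K Q) {δ : ℝ} (hδ : 0 ≤ δ) (f g : V) :
    ‖eulerStep Q δ f - eulerStep Q δ g‖ ≤ Real.exp (δ * K) * ‖f - g‖ :=
  calc ‖eulerStep Q δ f - eulerStep Q δ g‖ = ‖(f - g) + δ • (Q f - Q g)‖ := by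
        simp only [eulerStep, smul_sub]; abel_nf
    _ ≤ ‖f - g‖ + δ * (K * ‖f - g‖) := by
        refine norm_add_le_of_le le_rfl ?_
        rw [norm_smul, Real.norm_of_nonneg hδ]
        gcongr
        exact hQ.norm_sub_le f g
    _ = (δ * K + 1) * ‖f - g‖ := by ring
    _ ≤ Real.exp (δ * K) * ‖f - g‖ := by gcongr; exact Real.add_one_le_exp _

lemma norm_iterate_eulerStep_sub_le (hQ : LipschitzWith K Q) {δ : ℝ} (hδ : 0 ≤ δ) (f g : V)
    (n : ℕ) :
    ‖(eulerStep Q δ)^[n] f - (eulerStep Q δ)^[n] g‖ ≤ Real.exp (n * δ * K) * ‖f - g‖ := by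
  induction n with
  | zero => simp
  | succ n ih =>
    rw [Function.iterate_succ_apply', Function.iterate_succ_apply']
    calc _ ≤ Real.exp (δ * K) * (Real.exp (n * δ * K) * ‖f - g‖) :=
          (norm_eulerStep_sub_le hQ hδ _ _).trans (by gcongr)
      _ = Real.exp ((n + 1 : ℕ) * δ * K) * ‖f - g‖ := by
          rw [← mul_assoc, ← Real.exp_add]; push_cast; ring_nf

lemma iterate_eulerStep_zero_right (hQ0 : Q 0 = 0) (δ : ℝ) (n : ℕ) :
    (eulerStep Q δ)^[n] 0 = 0 :=
  Function.iterate_fixed (by simp [eulerStep, hQ0]) n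

lemma norm_iterate_eulerStep_le (hQ : LipschitzWith K Q) (hQ0 : Q 0 = 0) {δ : ℝ} (hδ : 0 ≤ δ)
    (f : V) (n : ℕ) : ‖(eulerStep Q δ)^[n] f‖ ≤ Real.exp (n * δ * K) * ‖f‖ := by
  simpa [iterate_eulerStep_zero_right hQ0] using norm_iterate_eulerStep_sub_le hQ hδ f 0 n

lemma norm_iterate_eulerStep_sub_iterate_le (hQ : LipschitzWith K Q) (hQ0 : Q 0 = 0)
    {δ δ' : ℝ} (hδ : 0 ≤ δ) (hδ' : 0 ≤ δ') (f : V) (n : ℕ) :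
    ‖(eulerStep Q δ)^[n] f - (eulerStep Q δ')^[n] f‖
      ≤ n * |δ - δ'| * K * Real.exp (n * max δ δ' * K) * ‖f‖ := by
  set M := max δ δ'
  induction n with
  | zero => simp
  | succ n ih =>
    rw [Function.iterate_succ_apply', Function.iterate_succ_apply']
    set x := (eulerStep Q δ)^[n] f
    set y := (eulerStep Q δ')^[n] f
    have hMK : 0 ≤ M * K := mul_nonneg (hδ.trans (le_max_left _ _)) K.2
    have step_change : ‖eulerStep Q δ x - eulerStep Q δ' x‖
        ≤ |δ - δ'| * K * Real.exp (n * M * K) * ‖f‖ := by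
      have hx : ‖x‖ ≤ Real.exp (n * M * K) * ‖f‖ :=
        (norm_iterate_eulerStep_le hQ hQ0 hδ f n).trans (by gcongr; exact le_max_left _ _)
      calc ‖eulerStep Q δ x - eulerStep Q δ' x‖ = |δ - δ'| * ‖Q x‖ := by
            rw [← Real.norm_eq_abs, ← norm_smul, eulerStep, eulerStep, sub_smul]; abel_nf
        _ ≤ |δ - δ'| * (K * (Real.exp (n * M * K) * ‖f‖)) := by
            gcongr; exact (hQ.norm_le_mul hQ0 x).trans (by gcongr)
        _ = _ := by ring
    have propagate : ‖eulerStep Q δ' x - eulerStep Q δ' y‖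
        ≤ Real.exp (M * K) * (n * |δ - δ'| * K * Real.exp (n * M * K) * ‖f‖) :=
      (norm_eulerStep_sub_le hQ hδ' x y).trans (by gcongr; exact le_max_right _ _)
    have hexp : Real.exp ((n + 1 : ℕ) * M * K) = Real.exp (M * K) * Real.exp (n * M * K) := by
      rw [← Real.exp_add]; push_cast; ring_nf
    have := Real.one_le_exp hMK
    have : 0 ≤ |δ - δ'| * K * Real.exp (n * M * K) * ‖f‖ := by positivity
    calc _ ≤ ‖eulerStep Q δ x - eulerStep Q δ' x‖ + ‖eulerStep Q δ' x - eulerStep Q δ' y‖ :=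
          norm_sub_le_norm_sub_add_norm_sub _ _ _
      _ ≤ _ := add_le_add step_change propagate
      _ ≤ _ := by rw [hexp]; push_cast; nlinarith

lemma norm_iterate_eulerStep_sub_self_le (hQ : LipschitzWith K Q) (hQ0 : Q 0 = 0) {δ : ℝ}
    (hδ : 0 ≤ δ) (f : V) (n : ℕ) :
    ‖(eulerStep Q δ)^[n] f - f‖ ≤ n * δ * K * Real.exp (n * δ * K) * ‖f‖ := by
  simpa [abs_of_nonneg hδ, max_eq_left hδ] using
    norm_iterate_eulerStep_sub_iterate_le hQ hQ0 hδ le_rfl f n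

lemma norm_iterate_eulerStep_taylor_le (hQ : LipschitzWith K Q) (hQ0 : Q 0 = 0) {δ : ℝ}
    (hδ : 0 ≤ δ) (f : V) (n : ℕ) :
    ‖(eulerStep Q δ)^[n] f - f - (n * δ) • Q f‖ ≤ (n * δ * K) ^ 2 * Real.exp (n * δ * K) * ‖f‖ := by
  induction n with
  | zero => simp
  | succ n ih =>
    rw [Function.iterate_succ_apply']
    set x := (eulerStep Q δ)^[n] f
    have hsplit : eulerStep Q δ x - f - ((n + 1 : ℕ) * δ) • Q f
        = (x - f - (n * δ) • Q f) + δ • (Q x - Q f) := by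
      simp only [eulerStep, Nat.cast_succ, add_mul, one_mul, add_smul, smul_sub]; abel
    have hlast : ‖δ • (Q x - Q f)‖ ≤ δ * K * (n * δ * K * Real.exp (n * δ * K) * ‖f‖) := by
      rw [norm_smul, Real.norm_of_nonneg hδ, mul_assoc]
      gcongr
      exact (hQ.norm_sub_le x f).trans
        (by gcongr; exact norm_iterate_eulerStep_sub_self_le hQ hQ0 hδ f n)
    have hexp : Real.exp (n * δ * K) ≤ Real.exp ((n + 1 : ℕ) * δ * K) := by
      gcongr; exact_mod_cast n.le_succ
    have : 0 ≤ δ * K := by positivity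
    have : 0 ≤ Real.exp (n * δ * K) * ‖f‖ := by positivity
    calc _ ≤ (n * δ * K) ^ 2 * Real.exp (n * δ * K) * ‖f‖
          + δ * K * (n * δ * K * Real.exp (n * δ * K) * ‖f‖) := by
          rw [hsplit]; exact norm_add_le_of_le ih hlast
      _ ≤ ((n + 1 : ℕ) * δ * K) ^ 2 * Real.exp (n * δ * K) * ‖f‖ := by
          push_cast; nlinarith [mul_nonneg (mul_nonneg this this) (Nat.cast_nonneg (α := ℝ) n)]
      _ ≤ _ := by gcongr

end EulerScheme

lemma tendsto_natFloor_mul_add_one_div {x : ℝ} (hx : 0 ≤ x) :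
    Tendsto (fun q : ℕ => ((⌊x * q⌋₊ + 1 : ℕ) : ℝ) / q) atTop (𝓝 x) := by
  have h := ((tendsto_nat_floor_mul_div_atTop hx).comp tendsto_natCast_atTop_atTop).add
    tendsto_one_div_atTop_nhds_zero_nat
  simpa [add_div] using h

section EulerLimit

variable {V : Type*} [NormedAddCommGroup V] [NormedSpace ℝ V] {Q : V → V} {K : ℝ≥0}

def IsEulerLimit (Q : V → V) (E : ℝ → V → V) : Prop :=
  ∀ t, 0 ≤ t → ∀ f, Tendsto (fun n : ℕ => (eulerStep Q (t / n))^[n] f) atTop (𝓝 (E t f))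

namespace IsEulerLimit

variable {E : ℝ → V → V} (hE : IsEulerLimit Q E) (hQ : LipschitzWith K Q) (hQ0 : Q 0 = 0)
include hE hQ

lemma norm_apply_sub_apply_le {t : ℝ} (ht : 0 ≤ t) (f g : V) :
    ‖E t f - E t g‖ ≤ Real.exp (t * K) * ‖f - g‖ :=
  le_of_tendsto ((hE t ht f).sub (hE t ht g)).norm <|
    (eventually_natCast_mul_div t).mono fun n hn => by
      simpa only [hn] using norm_iterate_eulerStep_sub_le hQ (δ := t / n) (by positivity) f g n

include hQ0

lemma norm_apply_le {t : ℝ} (ht : 0 ≤ t) (f : V) : ‖E t f‖ ≤ Real.exp (t * K) * ‖f‖ :=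
  le_of_tendsto (hE t ht f).norm <| (eventually_natCast_mul_div t).mono fun n hn => by
    simpa only [hn] using norm_iterate_eulerStep_le hQ hQ0 (δ := t / n) (by positivity) f n

lemma norm_apply_sub_self_le {t : ℝ} (ht : 0 ≤ t) (f : V) :
    ‖E t f - f‖ ≤ t * K * Real.exp (t * K) * ‖f‖ :=
  le_of_tendsto ((hE t ht f).sub_const f).norm <| (eventually_natCast_mul_div t).mono fun n hn => by
    simpa only [hn] using norm_iterate_eulerStep_sub_self_le hQ hQ0 (δ := t / n) (by positivity) f n

lemma norm_taylor_le {t : ℝ} (ht : 0 ≤ t) (f : V) :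
    ‖E t f - f - t • Q f‖ ≤ (t * K) ^ 2 * Real.exp (t * K) * ‖f‖ :=
  le_of_tendsto (((hE t ht f).sub_const f).sub_const (t • Q f)).norm <|
    (eventually_natCast_mul_div t).mono fun n hn => by
      simpa only [hn] using norm_iterate_eulerStep_taylor_le hQ hQ0 (δ := t / n) (by positivity) f n

lemma norm_apply_sub_apply_time_le {s t : ℝ} (hs : 0 ≤ s) (ht : 0 ≤ t) (f : V) :
    ‖E s f - E t f‖ ≤ |s - t| * K * Real.exp (max s t * K) * ‖f‖ :=
  le_of_tendsto ((hE s hs f).sub (hE t ht f)).norm <| (eventually_ne_atTop 0).mono fun n hn => by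
    have hn : (n : ℝ) ≠ 0 := Nat.cast_ne_zero.2 hn
    have h := norm_iterate_eulerStep_sub_iterate_le hQ hQ0 (δ := s / n) (δ' := t / n)
      (by positivity) (by positivity) f n
    rwa [div_sub_div_same, abs_div, Nat.abs_cast, max_div_div_right n.cast_nonneg,
      mul_div_cancel₀ _ hn, mul_div_cancel₀ _ hn] at h

lemma tendsto_apply {ι : Type*} {l : Filter ι} {τ : ι → ℝ} {g : ι → V} {t : ℝ} {f : V}
    (hτ0 : ∀ i, 0 ≤ τ i) (ht : 0 ≤ t) (hτ : Tendsto τ l (𝓝 t)) (hg : Tendsto g l (𝓝 f)) :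
    Tendsto (fun i => E (τ i) (g i)) l (𝓝 (E t f)) := by
  rw [tendsto_iff_norm_sub_tendsto_zero]
  let bound (p : ℝ × V) : ℝ :=
    Real.exp (p.1 * K) * ‖p.2 - f‖ + |p.1 - t| * K * Real.exp (max p.1 t * K) * ‖f‖
  have hbound : Tendsto (fun i => bound (τ i, g i)) l (𝓝 0) := by
    have hcont : Continuous bound := by fun_prop
    have h0 : bound (t, f) = 0 := by simp [bound]
    exact h0 ▸ (hcont.tendsto (t, f)).comp (hτ.prodMk_nhds hg)
  refine squeeze_zero (fun _ => norm_nonneg _) (fun i => ?_) hbound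
  exact (norm_sub_le_norm_sub_add_norm_sub _ (E (τ i) f) _).trans <| add_le_add
    (hE.norm_apply_sub_apply_le hQ (hτ0 i) _ _)
    (hE.norm_apply_sub_apply_time_le hQ hQ0 (hτ0 i) ht f)

omit hQ0 in
lemma apply_nat_div_add {p r : ℕ} (hp : 0 < p) (hr : 0 < r) (q : ℕ) (f : V) :
    E (p / q + r / q) f = E (r / q) (E (p / q) f) := by
  have hsub {m : ℕ} (hm : 0 < m) : Tendsto (fun k : ℕ => m * k) atTop atTop :=
    tendsto_id.const_mul_atTop' hm
  have hlhs := (hE ((p + r : ℕ) / q) (by positivity) f).comp (hsub (Nat.add_pos_left hp r))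
  have hrhs := tendsto_apply_of_norm_sub_le (C := Real.exp (r / q * K))
    (((hsub hr).eventually (eventually_natCast_mul_div (r / q))).mono fun k hk x => by
      simpa only [hk] using norm_iterate_eulerStep_sub_le hQ (δ := r / q / (r * k : ℕ))
        (by positivity) x _ (r * k))
    ((hE (r / q) (by positivity) (E (p / q) f)).comp (hsub hr))
    ((hE (p / q) (by positivity) f).comp (hsub hp))
  rw [← add_div, ← Nat.cast_add]
  -- along `n = m * k` steps for time `m / q`, every scheme uses the same step `1 / (q * k)`
  refine tendsto_nhds_unique (hlhs.congr fun k => ?_) hrhs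
  simp only [Function.comp_apply, iterate_eulerStep_nat_div]
  rw [add_mul, add_comm, Function.iterate_add_apply]

lemma apply_add {t h : ℝ} (ht : 0 ≤ t) (hh : 0 ≤ h) (f : V) : E (t + h) f = E h (E t f) := by
  -- positive numerators, as `apply_nat_div_add` requires
  set grid : ℝ → ℕ → ℝ := fun x q => ((⌊x * q⌋₊ + 1 : ℕ) : ℝ) / q
  have hgrid0 (x : ℝ) (q : ℕ) : 0 ≤ grid x q := by positivity
  have hlhs := hE.tendsto_apply hQ hQ0 (fun q => add_nonneg (hgrid0 t q) (hgrid0 h q))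
    (add_nonneg ht hh) ((tendsto_natFloor_mul_add_one_div ht).add
      (tendsto_natFloor_mul_add_one_div hh)) (tendsto_const_nhds (x := f))
  have hrhs := hE.tendsto_apply hQ hQ0 (hgrid0 h) hh (tendsto_natFloor_mul_add_one_div hh)
    (hE.tendsto_apply hQ hQ0 (hgrid0 t) ht (tendsto_natFloor_mul_add_one_div ht)
      (tendsto_const_nhds (x := f)))
  exact tendsto_nhds_unique (hlhs.congr fun q =>
    hE.apply_nat_div_add hQ (Nat.succ_pos _) (Nat.succ_pos _) q f) hrhs

lemma norm_taylor_backward_le {t : ℝ} (ht : 0 ≤ t) (f : V) :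
    ‖E t f - f - t • Q (E t f)‖ ≤ 2 * (t * K) ^ 2 * Real.exp (t * K) * ‖f‖ :=
  calc ‖E t f - f - t • Q (E t f)‖ = ‖(E t f - f - t • Q f) + t • (Q f - Q (E t f))‖ := by
        rw [smul_sub]; abel_nf
    _ ≤ (t * K) ^ 2 * Real.exp (t * K) * ‖f‖ + t * (K * (t * K * Real.exp (t * K) * ‖f‖)) := by
        refine norm_add_le_of_le (hE.norm_taylor_le hQ hQ0 ht f) ?_
        rw [norm_smul, Real.norm_of_nonneg ht]
        gcongr
        refine (hQ.norm_sub_le _ _).trans ?_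
        rw [norm_sub_rev]
        gcongr
        exact hE.norm_apply_sub_self_le hQ hQ0 ht f
    _ = 2 * (t * K) ^ 2 * Real.exp (t * K) * ‖f‖ := by ring

lemma norm_diffQuot_sub_le_of_lt {s t : ℝ} (ht : 0 ≤ t) (hts : t < s) (f : V) :
    ‖(s - t)⁻¹ • (E s f - E t f) - Q (E t f)‖ ≤ K ^ 2 * Real.exp (s * K) * (s - t) * ‖f‖ := by
  set u := s - t
  have hu : 0 < u := sub_pos.2 hts
  set g := E t f
  have hEs : E s f = E u g := by rw [← hE.apply_add hQ hQ0 ht hu.le, add_sub_cancel]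
  have hexp : Real.exp (u * K) * Real.exp (t * K) = Real.exp (s * K) := by
    rw [← Real.exp_add, ← add_mul, sub_add_cancel]
  calc ‖(s - t)⁻¹ • (E s f - E t f) - Q (E t f)‖ = u⁻¹ * ‖E u g - g - u • Q g‖ := by
        have hrw : u⁻¹ • (E u g - g) - Q g = u⁻¹ • (E u g - g - u • Q g) := by
          rw [smul_sub u⁻¹ (E u g - g), smul_smul, inv_mul_cancel₀ hu.ne', one_smul]
        rw [hEs, hrw, norm_smul, Real.norm_of_nonneg (inv_nonneg.2 hu.le)]
    _ ≤ u⁻¹ * ((u * K) ^ 2 * Real.exp (u * K) * (Real.exp (t * K) * ‖f‖)) := by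
        gcongr
        exact (hE.norm_taylor_le hQ hQ0 hu.le g).trans
          (by gcongr; exact hE.norm_apply_le hQ hQ0 ht f)
    _ = K ^ 2 * Real.exp (s * K) * u * ‖f‖ := by
        rw [← hexp]; field_simp

lemma norm_diffQuot_sub_le_of_gt {s t : ℝ} (hs : 0 ≤ s) (hst : s < t) (f : V) :
    ‖(s - t)⁻¹ • (E s f - E t f) - Q (E t f)‖ ≤ 2 * K ^ 2 * Real.exp (t * K) * (t - s) * ‖f‖ := by
  set u := t - s
  have hu : 0 < u := sub_pos.2 hst
  set g := E s f
  have hEt : E t f = E u g := by rw [← hE.apply_add hQ hQ0 hs hu.le, add_sub_cancel]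
  have hexp : Real.exp (u * K) * Real.exp (s * K) = Real.exp (t * K) := by
    rw [← Real.exp_add, ← add_mul, sub_add_cancel]
  have hsu : s - t = -u := (neg_sub t s).symm
  calc ‖(s - t)⁻¹ • (E s f - E t f) - Q (E t f)‖ = u⁻¹ * ‖E u g - g - u • Q (E u g)‖ := by
        have hrw : (-u)⁻¹ • (g - E u g) - Q (E u g) = u⁻¹ • (E u g - g - u • Q (E u g)) := by
          match_scalars <;> field_simp
        rw [hEt, hsu, hrw, norm_smul, Real.norm_of_nonneg (inv_nonneg.2 hu.le)]
    _ ≤ u⁻¹ * (2 * (u * K) ^ 2 * Real.exp (u * K) * (Real.exp (s * K) * ‖f‖)) := by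
        gcongr
        exact (hE.norm_taylor_backward_le hQ hQ0 hu.le g).trans
          (by gcongr; exact hE.norm_apply_le hQ hQ0 hs f)
    _ = 2 * K ^ 2 * Real.exp (t * K) * u * ‖f‖ := by
        rw [← hexp]; field_simp

lemma norm_diffQuot_sub_le {s t : ℝ} (hs : 0 ≤ s) (ht : 0 ≤ t) (hst : s ≠ t) (f : V) :
    ‖(s - t)⁻¹ • (E s f - E t f) - Q (E t f)‖
      ≤ 2 * K ^ 2 * Real.exp (max s t * K) * |s - t| * ‖f‖ := by
  rcases hst.lt_or_gt with hst | hts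
  · rw [max_eq_right hst.le, abs_of_neg (sub_neg.2 hst), neg_sub]
    exact hE.norm_diffQuot_sub_le_of_gt hQ hQ0 hs hst f
  · rw [max_eq_left hts.le, abs_of_pos (sub_pos.2 hts)]
    refine (hE.norm_diffQuot_sub_le_of_lt hQ hQ0 ht hts f).trans ?_
    have : 0 ≤ K ^ 2 * Real.exp (s * K) * (s - t) * ‖f‖ := by
      have := sub_pos.2 hts
      positivity
    linarith

end IsEulerLimit

end EulerLimit

section Operators

variable {X : Type*} [TopologicalSpace X]

lemma enorm_apply_le_opSemiNorm_mul (A : Op X) {f : X →ᵇ ℝ} (hf : f ≠ 0) :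
    ‖A f‖ₑ ≤ opSemiNorm A * ‖f‖ₑ := by
  have hf0 : ‖f‖ₑ ≠ 0 := ENNReal.coe_ne_zero.2 (nnnorm_ne_zero_iff.2 hf)
  rw [← ENNReal.div_le_iff hf0 enorm_ne_top]
  exact le_iSup₂ (f := fun (g : X →ᵇ ℝ) (_ : g ≠ 0) => ‖A g‖ₑ / ‖g‖ₑ) f hf

lemma opSemiNorm_le_ofReal (A : Op X) {c : ℝ} (h : ∀ f, ‖A f‖ ≤ c * ‖f‖) :
    opSemiNorm A ≤ ENNReal.ofReal c := by
  refine iSup₂_le fun f hf => (ENNReal.div_le_iff (x := ‖A f‖ₑ)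
    (ENNReal.coe_ne_zero.2 (nnnorm_ne_zero_iff.2 hf)) enorm_ne_top).2 ?_
  rw [← ofReal_norm, ← ENNReal.ofReal_coe_nnreal, coe_nnnorm, ← ENNReal.ofReal_mul' (norm_nonneg f)]
  exact ENNReal.ofReal_le_ofReal (h f)

lemma edist_apply_le_opDist_mul (A B : Op X) (f : X →ᵇ ℝ) :
    edist (A f) (B f) ≤ opDist A B * (1 + ‖f‖ₑ) := by
  rw [edist_eq_enorm_sub]
  rcases eq_or_ne f 0 with rfl | hf
  · exact le_self_add.trans (le_mul_of_one_le_right' le_self_add)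
  · exact (enorm_apply_le_opSemiNorm_mul (A - B) hf).trans
      (mul_le_mul' le_add_self le_add_self)

lemma tendsto_apply_of_tendsto_opDist {ι : Type*} {l : Filter ι} {A : ι → Op X} {B : Op X}
    (h : Tendsto (fun i => opDist (A i) B) l (𝓝 0)) (f : X →ᵇ ℝ) :
    Tendsto (fun i => A i f) l (𝓝 (B f)) := by
  rw [tendsto_iff_edist_tendsto_0]
  have hbound := ENNReal.Tendsto.mul_const h (Or.inr (ENNReal.add_ne_top.2 ⟨ENNReal.one_ne_top,
    enorm_ne_top⟩)) (b := 1 + ‖f‖ₑ)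
  rw [zero_mul] at hbound
  exact tendsto_of_tendsto_of_tendsto_of_le_of_le tendsto_const_nhds hbound (fun _ => zero_le)
    fun i => edist_apply_le_opDist_mul (A i) B f

lemma norm_apply_le_toNNReal_opSemiNorm_mul {A : Op X} (hA : opSemiNorm A ≠ ⊤) (hA0 : A 0 = 0)
    (f : X →ᵇ ℝ) : ‖A f‖ ≤ (opSemiNorm A).toNNReal * ‖f‖ := by
  rcases eq_or_ne f 0 with rfl | hf
  · simp [hA0]
  · have h := enorm_apply_le_opSemiNorm_mul A hf
    rw [← ENNReal.coe_toNNReal hA, ← ofReal_norm, ← ofReal_norm, ENNReal.ofReal_le_iff_le_toReal]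
      at h
    · simpa [ENNReal.toReal_mul] using h
    · exact ENNReal.mul_ne_top ENNReal.coe_ne_top ENNReal.ofReal_ne_top

namespace IsSublinearRate

variable {Q : Op X} (hQ : IsSublinearRate Q)
include hQ

lemma map_zero : Q 0 = 0 := by
  exact hQ.2.2.1 0

lemma lipschitzWith (hQb : opSemiNorm Q ≠ ⊤) : LipschitzWith (opSemiNorm Q).toNNReal Q := by
  set K := (opSemiNorm Q).toNNReal
  have one_sided (f g : X →ᵇ ℝ) (x : X) : Q f x - Q g x ≤ K * ‖f - g‖ := by
    have hsub := hQ.2.1 g (f - g) x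
    rw [add_sub_cancel] at hsub
    have hx := (le_abs_self _).trans ((Q (f - g)).norm_coe_le_norm x)
    linarith [norm_apply_le_toNNReal_opSemiNorm_mul hQb hQ.map_zero (f - g)]
  refine LipschitzWith.of_dist_le_mul fun f g => ?_
  rw [dist_eq_norm, dist_eq_norm, BoundedContinuousFunction.norm_le (by positivity)]
  intro x
  rw [BoundedContinuousFunction.sub_apply, Real.norm_eq_abs, abs_le]
  constructor
  · have := one_sided g f x
    rw [norm_sub_rev] at this
    linarith
  · exact one_sided f g x

end IsSublinearRate

end Operators

theorem stmt_12_general {X : Type*} [TopologicalSpace X]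
    (Q : Op X) (hQ : IsSublinearRate Q) (hQb : opSemiNorm Q ≠ ⊤)
    (E : ℝ → Op X)
    (hE : ∀ t : ℝ, 0 ≤ t → Tendsto (fun n => opDist (euler Q t n) (E t)) atTop (nhds 0)) :
    ∀ t : ℝ, 0 ≤ t →
      Tendsto (fun s => opSemiNorm ((s - t)⁻¹ • (E s - E t) - Q ∘ E t))
        (nhdsWithin t (Set.Ici 0 \ {t})) (nhds 0) := by
  intro t ht
  set K := (opSemiNorm Q).toNNReal
  have hEuler : IsEulerLimit Q E := fun t ht => tendsto_apply_of_tendsto_opDist (hE t ht)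
  let bound (s : ℝ) : ℝ := 2 * K ^ 2 * Real.exp (max s t * K) * |s - t|
  have hbound : Tendsto (fun s => ENNReal.ofReal (bound s)) (𝓝[Set.Ici 0 \ {t}] t) (𝓝 0) := by
    have hcont : Continuous bound := by fun_prop
    have h0 : ENNReal.ofReal (bound t) = 0 := by simp [bound]
    exact h0 ▸ (ENNReal.tendsto_ofReal (hcont.tendsto t)).mono_left nhdsWithin_le_nhds
  refine tendsto_of_tendsto_of_tendsto_of_le_of_le' tendsto_const_nhds hbound
    (.of_forall fun _ => zero_le) ?_
  filter_upwards [self_mem_nhdsWithin] with s ⟨hs, hst⟩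
  exact opSemiNorm_le_ofReal _ fun f =>
    hEuler.norm_diffQuot_sub_le (hQ.lipschitzWith hQb) hQ.map_zero hs ht hst f

theorem stmt_12 {X : Type*} [Countable X] [TopologicalSpace X] [DiscreteTopology X]
    (Q : Op X) (hQ : IsSublinearRate Q) (hQb : opSemiNorm Q ≠ ⊤)
    (E : ℝ → Op X)
    (hE : ∀ t : ℝ, 0 ≤ t → Tendsto (fun n => opDist (euler Q t n) (E t)) atTop (nhds 0)) :
    ∀ t : ℝ, 0 ≤ t →
      Tendsto (fun s => opSemiNorm ((s - t)⁻¹ • (E s - E t) - Q ∘ E t))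
        (nhdsWithin t (Set.Ici 0 \ {t})) (nhds 0) :=
  stmt_12_general Q hQ hQb E hE
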